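/- Telescoping estimate with vanishing perturbation: let (osc_ℓ) be a nonnegative sequence and suppose for all k > ℓ we have the splitting osc_k² = osc_k(common)² + osc_k(refined)², with osc_k(common) ≤ osc_ℓ(common) + a_{ℓ,k} and osc_k(refined) ≤ ρ · osc_ℓ(refined-part) + a_{ℓ,k}, where 0 < ρ < 1 and a_{ℓ,k} → 0 as ℓ, k → ∞. If additionally osc_ℓ(common parts intersected with any fixed finite set) → 0, then osc_ℓ → 0 (convergence of the full sequence). -/
import Mathlib


open Filter Topology

/-- Abstract telescoping estimate with vanishing perturbation: splitting of
`osc_k` into common and refined parts with stability on the common part,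
contraction (factor `ρ < 1`) on the refined part up to perturbations `a_{ℓ,k}`
vanishing in the double limit, and vanishing of the common parts, imply
convergence of the full sequence `osc_ℓ → 0`. -/
theorem stmt_18 (osc : ℕ → ℝ) (Ck Cl Rk Rl a : ℕ → ℕ → ℝ) (ρ : ℝ)
    (hρ0 : 0 < ρ) (hρ1 : ρ < 1)
    (hosc : ∀ ℓ, 0 ≤ osc ℓ)
    (hCk : ∀ ℓ k, 0 ≤ Ck ℓ k) (hCl : ∀ ℓ k, 0 ≤ Cl ℓ k)
    (hRk : ∀ ℓ k, 0 ≤ Rk ℓ k) (hRl : ∀ ℓ k, 0 ≤ Rl ℓ k)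
    (ha0 : ∀ ℓ k, 0 ≤ a ℓ k)
    (ha : ∀ ε : ℝ, 0 < ε → ∃ N, ∀ ℓ ≥ N, ∀ k > ℓ, a ℓ k ≤ ε)
    (hsplit_k : ∀ ℓ k, ℓ < k → osc k ^ 2 = Ck ℓ k ^ 2 + Rk ℓ k ^ 2)
    (hsplit_l : ∀ ℓ k, ℓ < k → osc ℓ ^ 2 = Cl ℓ k ^ 2 + Rl ℓ k ^ 2)
    (hstab : ∀ ℓ k, ℓ < k → Ck ℓ k ≤ Cl ℓ k + a ℓ k)
    (hred : ∀ ℓ k, ℓ < k → Rk ℓ k ≤ ρ * Rl ℓ k + a ℓ k)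
    (hcommon : ∀ ℓ, Tendsto (fun k => Ck ℓ k) atTop (𝓝 0)) :
    Tendsto osc atTop (𝓝 0) := by
  have hCl_le : ∀ ℓ k, ℓ < k → Cl ℓ k ≤ osc ℓ := by
    intro ℓ k h
    nlinarith [hsplit_l ℓ k h, hRl ℓ k, hCl ℓ k, hosc ℓ]
  have hRl_le : ∀ ℓ k, ℓ < k → Rl ℓ k ≤ osc ℓ := by
    intro ℓ k h
    nlinarith [hsplit_l ℓ k h, hRl ℓ k, hCl ℓ k, hosc ℓ]
  have hosc_le : ∀ ℓ k, ℓ < k → osc k ≤ Ck ℓ k + Rk ℓ k := by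
    intro ℓ k h
    nlinarith [hsplit_k ℓ k h, hRk ℓ k, hCk ℓ k, hosc k,
      mul_nonneg (hCk ℓ k) (hRk ℓ k)]
  -- global bound on osc
  obtain ⟨N₀, hN₀⟩ := ha 1 one_pos
  obtain ⟨M, hM0, hM⟩ : ∃ M : ℝ, 0 ≤ M ∧ ∀ k, osc k ≤ M := by
    have hsum2 : 0 ≤ ∑ i ∈ Finset.range (N₀ + 1), osc i :=
      Finset.sum_nonneg fun i _ => hosc i
    refine ⟨2 * osc N₀ + 2 + ∑ i ∈ Finset.range (N₀ + 1), osc i,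
      by nlinarith [hosc N₀], ?_⟩
    intro k
    have hsum : 0 ≤ ∑ i ∈ Finset.range (N₀ + 1), osc i :=
      Finset.sum_nonneg fun i _ => hosc i
    rcases le_or_gt k N₀ with hk | hk
    · have : osc k ≤ ∑ i ∈ Finset.range (N₀ + 1), osc i :=
        Finset.single_le_sum (fun i _ => hosc i)
          (Finset.mem_range.mpr (Nat.lt_succ_of_le hk))
      nlinarith [hosc N₀]
    · have h1 := hosc_le N₀ k hk
      have h2 := hstab N₀ k hk
      have h3 := hred N₀ k hk
      have h4 := hCl_le N₀ k hk
      have h5 := hRl_le N₀ k hk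
      have h6 := hN₀ N₀ le_rfl k hk
      nlinarith [hRl N₀ k, hosc N₀]
  -- key one-step contraction
  have key : ∀ δ : ℝ, 0 < δ → ∃ N, ∀ ℓ ≥ N, ∃ K, ∀ k ≥ K,
      osc k ≤ ρ * osc ℓ + δ := by
    intro δ hδ
    obtain ⟨N, hN⟩ := ha (δ / 2) (by linarith)
    refine ⟨N, fun ℓ hℓ => ?_⟩
    have hC := (hcommon ℓ).eventually (eventually_le_nhds (show (0:ℝ) < δ/2 by linarith))
    obtain ⟨K₁, hK₁⟩ := eventually_atTop.mp hC
    refine ⟨max K₁ (ℓ + 1), fun k hk => ?_⟩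
    have hkℓ : ℓ < k := lt_of_lt_of_le (Nat.lt_succ_self ℓ) (le_trans (le_max_right _ _) hk)
    have h1 := hosc_le ℓ k hkℓ
    have h2 := hred ℓ k hkℓ
    have h3 := hRl_le ℓ k hkℓ
    have h4 := hN ℓ hℓ k hkℓ
    have h5 := hK₁ k (le_trans (le_max_left _ _) hk)
    nlinarith
  -- conclusion
  rw [Metric.tendsto_atTop]
  intro ε hε
  set δ : ℝ := ε * (1 - ρ) / 2 with hδdef
  have hδ : 0 < δ := by
    have : 0 < 1 - ρ := by linarith
    positivity
  obtain ⟨N, hN⟩ := key δ hδ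
  have iter : ∀ n : ℕ, ∃ K, ∀ k ≥ K, osc k ≤ ρ ^ n * M + δ / (1 - ρ) := by
    intro n
    induction n with
    | zero =>
        refine ⟨0, fun k _ => ?_⟩
        have : 0 ≤ δ / (1 - ρ) := by
          have : 0 < 1 - ρ := by linarith
          positivity
        simpa using le_trans (hM k) (by linarith)
    | succ n ih =>
        obtain ⟨K, hK⟩ := ih
        obtain ⟨K', hK'⟩ := hN (max K N) (le_max_right _ _)
        refine ⟨K', fun k hk => ?_⟩
        have h1 := hK' k hk
        have h2 := hK (max K N) (le_max_left _ _)
        have h1ρ : 0 < 1 - ρ := by linarith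
        have : ρ * osc (max K N) ≤ ρ * (ρ ^ n * M + δ / (1 - ρ)) :=
          mul_le_mul_of_nonneg_left h2 hρ0.le
        have hfield : ρ * (δ / (1 - ρ)) + δ = δ / (1 - ρ) := by
          field_simp
          ring
        calc osc k ≤ ρ * osc (max K N) + δ := h1
          _ ≤ ρ * (ρ ^ n * M + δ / (1 - ρ)) + δ := by linarith
          _ = ρ ^ (n + 1) * M + (ρ * (δ / (1 - ρ)) + δ) := by ring
          _ = ρ ^ (n + 1) * M + δ / (1 - ρ) := by rw [hfield]
  obtain ⟨n, hn⟩ := exists_pow_lt_of_lt_one (show (0:ℝ) < ε / 2 / (M + 1) by positivity) hρ1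
  obtain ⟨K, hK⟩ := iter n
  refine ⟨K, fun k hk => ?_⟩
  have h1 := hK k hk
  have hpow : ρ ^ n * M < ε / 2 := by
    have hpos : 0 < M + 1 := by linarith
    have : ρ ^ n * (M + 1) < ε / 2 := by
      have := mul_lt_mul_of_pos_right hn hpos
      rwa [div_mul_cancel₀] at this
      exact ne_of_gt hpos
    nlinarith [pow_pos hρ0 n]
  have hδle : δ / (1 - ρ) = ε / 2 := by
    have h1ρ : (1 : ℝ) - ρ ≠ 0 := by intro h; nlinarith
    field_simp [hδdef]
    ring
  rw [Real.dist_eq, sub_zero, abs_of_nonneg (hosc k)]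
  rw [hδle] at h1
  linarith
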